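/- arXiv:1805.09654 — 5 statements merged into one kernel-verified Lean document; each statement's English description precedes it below -/
import Mathlib

section
/- Fix k0 < K, t0 < T̃, and suppose λ ≥ 0 and the atom D_{k0} is not the zero matrix. Then the function y ↦ F(z^{(y)}) restricted to y ∈ [0, ∞) has a unique minimizer, and this minimizer equals max((β_{k0}[t0](z) − λ) / ‖D_{k0}‖₂², 0). -/
open Finset

noncomputable section

/-- Convolution `(z ∗ D)[p,t] = Σ_{s+τ=t, s<T̃, τ<L} z[s]·D[p,τ]`. -/
def conv (Ttil L : ℕ) (z : ℕ → ℝ) (D : ℕ → ℕ → ℝ) (p t : ℕ) : ℝ :=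
  ∑ s ∈ range Ttil, ∑ τ ∈ range L, if s + τ = t then z s * D p τ else 0

/-- Correlation `(D ∗̃ α)[t] = Σ_{p<P} Σ_{τ<L} D[p,τ]·α[p,t+τ]`. -/
def corr (P L : ℕ) (D : ℕ → ℕ → ℝ) (α : ℕ → ℕ → ℝ) (t : ℕ) : ℝ :=
  ∑ p ∈ range P, ∑ τ ∈ range L, D p τ * α p (t + τ)

/-- The CSC objective
`F(z) = (1/2)·‖X − Σ_k z_k ∗ D_k‖₂² + λ·Σ_k Σ_t |z_k[t]|` (with `T = T̃ + L − 1`). -/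
def cscObj (P K L Ttil : ℕ) (X : ℕ → ℕ → ℝ) (D : ℕ → ℕ → ℕ → ℝ) (lam : ℝ)
    (z : ℕ → ℕ → ℝ) : ℝ :=
  (1 / 2) * ∑ p ∈ range P, ∑ t ∈ range (Ttil + L - 1),
      (X p t - ∑ k ∈ range K, conv Ttil L (z k) (D k) p t) ^ 2
    + lam * ∑ k ∈ range K, ∑ t ∈ range Ttil, |z k t|

/-- `β_k[t](z) = (D_k ∗̃ (X − Σ_l z_l ∗ D_l + z_k[t]·(e_t ∗ D_k)))[t]`. -/
def beta (P K L Ttil : ℕ) (X : ℕ → ℕ → ℝ) (D : ℕ → ℕ → ℕ → ℝ)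
    (z : ℕ → ℕ → ℝ) (k t : ℕ) : ℝ :=
  corr P L (D k)
    (fun p s =>
      X p s - ∑ l ∈ range K, conv Ttil L (z l) (D l) p s
        + z k t * conv Ttil L (fun s' => if s' = t then 1 else 0) (D k) p s) t

/-- `z^{(y)}` : replace the coordinate `z_{k0}[t0]` by `y`. -/
def updateZ (z : ℕ → ℕ → ℝ) (k0 t0 : ℕ) (y : ℝ) : ℕ → ℕ → ℝ :=
  fun k t => if k = k0 ∧ t = t0 then y else z k t

/-- Linearity of convolution in the activation. -/
lemma conv_add_smul (Ttil L : ℕ) (f g : ℕ → ℝ) (c : ℝ) (D : ℕ → ℕ → ℝ) (p t : ℕ) :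
    conv Ttil L (fun s => f s + c * g s) D p t
      = conv Ttil L f D p t + c * conv Ttil L g D p t := by
  simp only [conv, Finset.mul_sum, ← Finset.sum_add_distrib]
  refine Finset.sum_congr rfl fun s _ => Finset.sum_congr rfl fun τ _ => ?_
  split_ifs <;> ring

/-- Convolution with a delta at `t0`. -/
lemma conv_delta (Ttil L t0 : ℕ) (ht0 : t0 < Ttil) (Dk : ℕ → ℕ → ℝ) (p t : ℕ) :
    conv Ttil L (fun s => if s = t0 then 1 else 0) Dk p t
      = ∑ τ ∈ range L, if t0 + τ = t then Dk p τ else 0 := by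
  unfold conv
  rw [Finset.sum_comm]
  refine Finset.sum_congr rfl fun τ _ => ?_
  have : (∑ s ∈ range Ttil,
      if s + τ = t then (if s = t0 then (1:ℝ) else 0) * Dk p τ else 0)
      = ∑ s ∈ range Ttil, if s = t0 then (if t0 + τ = t then Dk p τ else 0) else 0 := by
    refine Finset.sum_congr rfl fun s _ => ?_
    split_ifs <;> simp_all
  rw [this, Finset.sum_ite_eq' (range Ttil) t0]
  simp [Finset.mem_range.mpr ht0]

/-- Sum against a delta-convolution collapses the time sum. -/
lemma sum_conv_delta_mul (Ttil L t0 : ℕ) (ht0 : t0 < Ttil) (hL : 0 < L)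
    (Dk : ℕ → ℕ → ℝ) (p : ℕ) (F : ℕ → ℝ) :
    ∑ t ∈ range (Ttil + L - 1),
        conv Ttil L (fun s => if s = t0 then 1 else 0) Dk p t * F t
      = ∑ τ ∈ range L, Dk p τ * F (t0 + τ) := by
  have h1 : ∀ t, conv Ttil L (fun s => if s = t0 then 1 else 0) Dk p t * F t
      = ∑ τ ∈ range L, if t0 + τ = t then Dk p τ * F t else 0 := by
    intro t
    rw [conv_delta Ttil L t0 ht0, Finset.sum_mul]
    refine Finset.sum_congr rfl fun τ _ => ?_
    split_ifs <;> simp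
  simp_rw [h1]
  rw [Finset.sum_comm]
  refine Finset.sum_congr rfl fun τ hτ => ?_
  rw [Finset.sum_ite_eq (range (Ttil + L - 1)) (t0 + τ) (fun t => Dk p τ * F t)]
  have : t0 + τ ∈ range (Ttil + L - 1) := by
    rw [Finset.mem_range] at *
    omega
  simp [this]

/-- Value of the delta-convolution at a shifted index. -/
lemma conv_delta_eval (Ttil L t0 : ℕ) (ht0 : t0 < Ttil) (Dk : ℕ → ℕ → ℝ) (p τ : ℕ)
    (hτ : τ < L) :
    conv Ttil L (fun s => if s = t0 then 1 else 0) Dk p (t0 + τ) = Dk p τ := by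
  rw [conv_delta Ttil L t0 ht0]
  have : ∀ τ' ∈ range L, (if t0 + τ' = t0 + τ then Dk p τ' else 0)
      = if τ' = τ then Dk p τ' else 0 := by
    intro τ' _
    simp [Nat.add_right_cancel_iff, Nat.add_left_cancel_iff]
  rw [Finset.sum_congr rfl this, Finset.sum_ite_eq' (range L) τ]
  simp [Finset.mem_range.mpr hτ]

/-- For `λ ≥ 0` and `D_{k0} ≠ 0`, the function `y ↦ F(z^{(y)})` restricted to
`[0, ∞)` has a unique minimizer, equal to `max((β_{k0}[t0](z) − λ)/‖D_{k0}‖₂², 0)`. -/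
theorem csc_coordinate_update_unique_minimizer
    (P K L Ttil : ℕ) (hP : 0 < P) (hK : 0 < K) (hL : 0 < L) (hTtil : 0 < Ttil)
    (X : ℕ → ℕ → ℝ) (D : ℕ → ℕ → ℕ → ℝ) (z : ℕ → ℕ → ℝ)
    (lam : ℝ) (hlam : 0 ≤ lam)
    (k0 t0 : ℕ) (hk0 : k0 < K) (ht0 : t0 < Ttil)
    (hD : ∃ p ∈ range P, ∃ τ ∈ range L, D k0 p τ ≠ 0) :
    letI normD2 : ℝ := ∑ p ∈ range P, ∑ τ ∈ range L, (D k0 p τ) ^ 2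
    letI ystar : ℝ := max ((beta P K L Ttil X D z k0 t0 - lam) / normD2) 0
    0 ≤ ystar ∧
      ∀ y : ℝ, 0 ≤ y → y ≠ ystar →
        cscObj P K L Ttil X D lam (updateZ z k0 t0 ystar)
          < cscObj P K L Ttil X D lam (updateZ z k0 t0 y) := by
  set N : ℝ := ∑ p ∈ range P, ∑ τ ∈ range L, (D k0 p τ) ^ 2 with hNdef
  set B : ℝ := beta P K L Ttil X D z k0 t0 with hBdef
  set E : ℕ → ℕ → ℝ :=
    fun p t => conv Ttil L (fun s => if s = t0 then 1 else 0) (D k0) p t with hEdef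
  set A : ℕ → ℕ → ℝ :=
    fun p t => X p t - ∑ l ∈ range K, conv Ttil L (z l) (D l) p t + z k0 t0 * E p t
    with hAdef
  -- positivity of N
  have hN : 0 < N := by
    obtain ⟨p, hp, τ, hτ, hDpτ⟩ := hD
    refine Finset.sum_pos' (fun i _ => Finset.sum_nonneg fun j _ => sq_nonneg _) ⟨p, hp, ?_⟩
    refine Finset.sum_pos' (fun j _ => sq_nonneg _) ⟨τ, hτ, ?_⟩
    positivity
  -- residual after update
  have hres : ∀ (y : ℝ) (p t : ℕ),
      X p t - ∑ k ∈ range K, conv Ttil L (updateZ z k0 t0 y k) (D k) p t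
        = A p t - y * E p t := by
    intro y p t
    have hdiff : ∀ k ∈ range K,
        conv Ttil L (updateZ z k0 t0 y k) (D k) p t - conv Ttil L (z k) (D k) p t
          = if k = k0 then (y - z k0 t0) * E p t else 0 := by
      intro k _
      by_cases hk : k = k0
      · have hfun : updateZ z k0 t0 y k
            = fun s => z k s + (y - z k0 t0) * (if s = t0 then 1 else 0) := by
          funext s
          by_cases hs : s = t0
          · simp only [updateZ, hk, hs, and_self, if_true, if_pos]
            ring
          · simp [updateZ, hk, hs]
        rw [hfun, conv_add_smul]
        rw [if_pos hk, hk]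
        ring
      · have hfun : updateZ z k0 t0 y k = z k := by
          funext s; simp [updateZ, hk]
        simp [hfun, hk]
    have hsum : ∑ k ∈ range K,
        (conv Ttil L (updateZ z k0 t0 y k) (D k) p t - conv Ttil L (z k) (D k) p t)
          = (y - z k0 t0) * E p t := by
      rw [Finset.sum_congr rfl hdiff, Finset.sum_ite_eq' (range K) k0]
      simp [Finset.mem_range.mpr hk0]
    rw [Finset.sum_sub_distrib] at hsum
    simp only [hAdef]
    linarith
  -- sum of E squared
  have hE2 : ∑ p ∈ range P, ∑ t ∈ range (Ttil + L - 1), (E p t) ^ 2 = N := by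
    rw [hNdef]
    refine Finset.sum_congr rfl fun p _ => ?_
    have : ∑ t ∈ range (Ttil + L - 1), (E p t) ^ 2
        = ∑ t ∈ range (Ttil + L - 1), E p t * E p t := by
      refine Finset.sum_congr rfl fun t _ => sq (E p t) ▸ (sq (E p t)).symm ▸ (by ring)
    rw [this, hEdef]
    rw [sum_conv_delta_mul Ttil L t0 ht0 hL (D k0) p
      (fun t => conv Ttil L (fun s => if s = t0 then 1 else 0) (D k0) p t)]
    refine Finset.sum_congr rfl fun τ hτ => ?_
    rw [conv_delta_eval Ttil L t0 ht0 (D k0) p τ (Finset.mem_range.mp hτ)]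
    ring
  -- sum A * E equals beta
  have hAE : ∑ p ∈ range P, ∑ t ∈ range (Ttil + L - 1), A p t * E p t = B := by
    have hB : B = ∑ p ∈ range P, ∑ τ ∈ range L, D k0 p τ * A p (t0 + τ) := rfl
    rw [hB]
    refine Finset.sum_congr rfl fun p _ => ?_
    have : ∑ t ∈ range (Ttil + L - 1), A p t * E p t
        = ∑ t ∈ range (Ttil + L - 1), E p t * A p t := by
      refine Finset.sum_congr rfl fun t _ => mul_comm _ _
    rw [this, hEdef, sum_conv_delta_mul Ttil L t0 ht0 hL (D k0) p (fun t => A p t)]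
  -- sparsity part
  have hsp : ∀ y : ℝ,
      ∑ k ∈ range K, ∑ t ∈ range Ttil, |updateZ z k0 t0 y k t|
        = (∑ k ∈ range K, ∑ t ∈ range Ttil, |updateZ z k0 t0 0 k t|) + |y| := by
    intro y
    have hdiff : ∀ k ∈ range K,
        (∑ t ∈ range Ttil, |updateZ z k0 t0 y k t|)
          - (∑ t ∈ range Ttil, |updateZ z k0 t0 0 k t|)
          = if k = k0 then |y| else 0 := by
      intro k _
      by_cases hk : k = k0
      · rw [if_pos hk, ← Finset.sum_sub_distrib]
        have h2 : ∀ t ∈ range Ttil,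
            |updateZ z k0 t0 y k t| - |updateZ z k0 t0 0 k t|
              = if t = t0 then |y| else 0 := by
          intro t _
          by_cases ht : t = t0 <;> simp [updateZ, hk, ht]
        rw [Finset.sum_congr rfl h2, Finset.sum_ite_eq' (range Ttil) t0]
        simp [Finset.mem_range.mpr ht0]
      · have : ∀ t, updateZ z k0 t0 y k t = updateZ z k0 t0 0 k t := by
          intro t; simp [updateZ, hk]
        simp [this, hk]
    have hsum : ∑ k ∈ range K,
        ((∑ t ∈ range Ttil, |updateZ z k0 t0 y k t|)
          - (∑ t ∈ range Ttil, |updateZ z k0 t0 0 k t|)) = |y| := by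
      rw [Finset.sum_congr rfl hdiff, Finset.sum_ite_eq' (range K) k0]
      simp [Finset.mem_range.mpr hk0]
    rw [Finset.sum_sub_distrib] at hsum
    linarith
  -- closed form of the objective along the coordinate
  have hg : ∀ y : ℝ,
      cscObj P K L Ttil X D lam (updateZ z k0 t0 y)
        = cscObj P K L Ttil X D lam (updateZ z k0 t0 0)
            + ((1/2) * N * y^2 - B * y + lam * |y|) := by
    intro y
    have hsq : ∀ (y : ℝ), ∑ p ∈ range P, ∑ t ∈ range (Ttil + L - 1),
        (X p t - ∑ k ∈ range K, conv Ttil L (updateZ z k0 t0 y k) (D k) p t) ^ 2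
        = (∑ p ∈ range P, ∑ t ∈ range (Ttil + L - 1), (A p t)^2)
          - 2 * y * (∑ p ∈ range P, ∑ t ∈ range (Ttil + L - 1), A p t * E p t)
          + y^2 * (∑ p ∈ range P, ∑ t ∈ range (Ttil + L - 1), (E p t)^2) := by
      intro y
      have h1 : ∀ p ∈ range P, ∀ t ∈ range (Ttil + L - 1),
          (X p t - ∑ k ∈ range K, conv Ttil L (updateZ z k0 t0 y k) (D k) p t) ^ 2
            = (A p t)^2 - 2 * y * (A p t * E p t) + y^2 * (E p t)^2 := by
        intro p _ t _
        rw [hres y p t]; ring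
      rw [Finset.sum_congr rfl fun p hp => Finset.sum_congr rfl fun t ht => h1 p hp t ht]
      simp only [Finset.sum_add_distrib, Finset.sum_sub_distrib, ← Finset.mul_sum]
    unfold cscObj
    rw [hsq y, hsq 0, hsp y, hsp 0, hAE, hE2]
    simp only [abs_zero]
    ring
  refine ⟨le_max_right _ _, fun y hy hne => ?_⟩
  have hystar : (max ((B - lam) / N) 0 : ℝ) = max ((B - lam) / N) 0 := rfl
  set s : ℝ := max ((B - lam) / N) 0 with hs
  have hs0 : 0 ≤ s := le_max_right _ _
  rw [hg y, hg s, abs_of_nonneg hy, abs_of_nonneg hs0]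
  have key : (1/2) * N * s^2 - B * s + lam * s < (1/2) * N * y^2 - B * y + lam * y := by
    rcases le_or_gt ((B - lam) / N) 0 with h | h
    · have hseq : s = 0 := by rw [hs]; exact max_eq_right h
      have hBlam : B - lam ≤ 0 := by
        by_contra h'
        push_neg at h'
        have := div_pos h' hN
        linarith
      have hypos : 0 < y := by
        rcases lt_or_eq_of_le hy with h'' | h''
        · exact h''
        · exact absurd (h'' ▸ hseq.symm) hne
      rw [hseq]
      nlinarith [mul_pos hN (mul_pos hypos hypos),
        mul_nonneg (by linarith : (0:ℝ) ≤ lam - B) (le_of_lt hypos)]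
    · have hseq : s = (B - lam) / N := by rw [hs]; exact max_eq_left (le_of_lt h)
      have hNs : N * s = B - lam := by
        rw [hseq]; field_simp
      have hys : 0 < (y - s)^2 := by
        have : y - s ≠ 0 := sub_ne_zero.mpr hne
        positivity
      nlinarith [mul_pos hN hys]
  linarith
end
end

section
/- Fix k0 < K and t0 < T̃. For every y ∈ ℝ, the cost difference satisfies the exact identity F(z) − F(z^{(y)}) = (‖D_{k0}‖₂² / 2)·(z_{k0}[t0]² − y²) − β_{k0}[t0](z)·(z_{k0}[t0] − y) + λ·(|z_{k0}[t0]| − |y|). -/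
open Finset

noncomputable section

lemma conv_single (Ttil L t0 : ℕ) (ht0 : t0 < Ttil) (D : ℕ → ℕ → ℝ) (p t : ℕ) :
    conv Ttil L (fun s => if s = t0 then 1 else 0) D p t
      = ∑ τ ∈ range L, if t0 + τ = t then D p τ else 0 := by
  simp only [conv]
  have h : ∀ s ∈ range Ttil,
      (∑ τ ∈ range L, if s + τ = t then (if s = t0 then (1:ℝ) else 0) * D p τ else 0)
        = if s = t0 then (∑ τ ∈ range L, if t0 + τ = t then D p τ else 0) else 0 := by
    intro s _
    split_ifs with h
    · subst h; exact Finset.sum_congr rfl fun τ _ => by split_ifs <;> ring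
    · simp [h]
  rw [Finset.sum_congr rfl h, Finset.sum_ite_eq' (range Ttil) t0, if_pos (mem_range.mpr ht0)]

lemma sum_single_mul (T L t0 : ℕ) (ht : ∀ τ < L, t0 + τ < T) (d f : ℕ → ℝ) :
    ∑ t ∈ range T, (∑ τ ∈ range L, if t0 + τ = t then d τ else 0) * f t
      = ∑ τ ∈ range L, d τ * f (t0 + τ) := by
  simp only [Finset.sum_mul]
  rw [Finset.sum_comm]
  refine Finset.sum_congr rfl fun τ hτ => ?_
  have h1 : ∀ t ∈ range T, (if t0 + τ = t then d τ else 0) * f t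
      = if t = t0 + τ then d τ * f t else 0 := by
    intro t _
    split_ifs with h1 h2 h2
    · ring
    · exact absurd h1.symm h2
    · exact absurd h2.symm h1
    · ring
  rw [Finset.sum_congr rfl h1, Finset.sum_ite_eq' (range T) (t0 + τ),
    if_pos (mem_range.mpr (ht τ (mem_range.mp hτ)))]

/-- the exact cost–difference identity
`F(z) − F(z^{(y)}) = (‖D_{k0}‖₂²/2)(z_{k0}[t0]² − y²) − β_{k0}[t0](z)(z_{k0}[t0] − y)
  + λ(|z_{k0}[t0]| − |y|)`. -/
theorem csc_cost_difference
    (P K L Ttil : ℕ) (hP : 0 < P) (hK : 0 < K) (hL : 0 < L) (hTtil : 0 < Ttil)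
    (X : ℕ → ℕ → ℝ) (D : ℕ → ℕ → ℕ → ℝ) (z : ℕ → ℕ → ℝ) (lam : ℝ)
    (k0 t0 : ℕ) (hk0 : k0 < K) (ht0 : t0 < Ttil) (y : ℝ) :
    cscObj P K L Ttil X D lam z - cscObj P K L Ttil X D lam (updateZ z k0 t0 y)
      = (∑ p ∈ range P, ∑ τ ∈ range L, (D k0 p τ) ^ 2) / 2 * ((z k0 t0) ^ 2 - y ^ 2)
        - beta P K L Ttil X D z k0 t0 * (z k0 t0 - y)
        + lam * (|z k0 t0| - |y|) := by
  set u := z k0 t0 with hu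
  set c := y - u with hc
  set T := Ttil + L - 1 with hT
  have hmem : ∀ τ < L, t0 + τ < T := by intro τ hτ; omega
  set A : ℕ → ℕ → ℝ := fun p t => X p t - ∑ k ∈ range K, conv Ttil L (z k) (D k) p t with hA
  set E : ℕ → ℕ → ℝ := fun p t => ∑ τ ∈ range L, if t0 + τ = t then D k0 p τ else 0 with hE
  have hconvE : ∀ p t, conv Ttil L (fun s => if s = t0 then 1 else 0) (D k0) p t = E p t :=
    fun p t => conv_single Ttil L t0 ht0 (D k0) p t
  have hEat : ∀ p, ∀ τ < L, E p (t0 + τ) = D k0 p τ := by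
    intro p τ hτ
    simp only [hE]
    have h : ∀ τ' ∈ range L, (if t0 + τ' = t0 + τ then D k0 p τ' else 0)
        = if τ' = τ then D k0 p τ' else 0 := by
      intro τ' _
      split_ifs with h1 h2 h2
      · rfl
      · omega
      · omega
      · rfl
    rw [Finset.sum_congr rfl h, Finset.sum_ite_eq' (range L) τ, if_pos (mem_range.mpr hτ)]
  -- updated convolution
  have hconv' : ∀ k p t, conv Ttil L (updateZ z k0 t0 y k) (D k) p t
      = conv Ttil L (z k) (D k) p t + (if k = k0 then c * E p t else 0) := by
    intro k p t
    by_cases hk : k = k0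
    · rw [hk]
      have hfun : (updateZ z k0 t0 y k0) = fun s => z k0 s + c * (if s = t0 then 1 else 0) := by
        funext s
        simp only [updateZ, eq_self_iff_true, true_and]
        split_ifs with hs
        · rw [hs, hc, hu]; ring
        · ring
      rw [hfun, conv_add_smul, hconvE, if_pos rfl]
    · have hfun : (updateZ z k0 t0 y k) = z k := by
        funext s; simp [updateZ, hk]
      rw [hfun]; simp [hk]
  -- updated residual
  have hres : ∀ p t, X p t - ∑ k ∈ range K, conv Ttil L (updateZ z k0 t0 y k) (D k) p t
      = A p t - c * E p t := by
    intro p t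
    simp only [hconv']
    rw [Finset.sum_add_distrib, Finset.sum_ite_eq' (range K) k0 (fun _ => c * E p t),
      if_pos (mem_range.mpr hk0)]
    simp only [hA]
    ring
  -- sums against E
  have hEA : ∀ p, ∑ t ∈ range T, E p t * A p t
      = ∑ τ ∈ range L, D k0 p τ * A p (t0 + τ) := by
    intro p
    simp only [hE]
    exact sum_single_mul T L t0 hmem _ _
  have hEE : ∀ p, ∑ t ∈ range T, E p t * E p t
      = ∑ τ ∈ range L, D k0 p τ ^ 2 := by
    intro p
    have h1 : ∑ t ∈ range T, E p t * E p t = ∑ τ ∈ range L, D k0 p τ * E p (t0 + τ) := by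
      simp only [hE]
      exact sum_single_mul T L t0 hmem _ _
    rw [h1]
    refine Finset.sum_congr rfl fun τ hτ => ?_
    rw [hEat p τ (mem_range.mp hτ)]
    ring
  -- beta
  have hbeta : beta P K L Ttil X D z k0 t0
      = (∑ p ∈ range P, ∑ τ ∈ range L, D k0 p τ * A p (t0 + τ))
        + u * ∑ p ∈ range P, ∑ τ ∈ range L, D k0 p τ ^ 2 := by
    simp only [beta, corr, hconvE, ← hu, ← hA]
    rw [Finset.mul_sum, ← Finset.sum_add_distrib]
    refine Finset.sum_congr rfl fun p _ => ?_
    rw [Finset.mul_sum, ← Finset.sum_add_distrib]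
    refine Finset.sum_congr rfl fun τ hτ => ?_
    rw [hEat p τ (mem_range.mp hτ)]
    ring
  -- penalty
  have habs : ∑ k ∈ range K, ∑ t ∈ range Ttil, |updateZ z k0 t0 y k t|
      = (∑ k ∈ range K, ∑ t ∈ range Ttil, |z k t|) + (|y| - |u|) := by
    have h1 : ∀ k ∈ range K, ∀ t ∈ range Ttil, |updateZ z k0 t0 y k t|
        = |z k t| + (if t = t0 then (if k = k0 then |y| - |z k t| else 0) else 0) := by
      intro k _ t _
      by_cases hk : k = k0 <;> by_cases ht : t = t0 <;>
        simp only [updateZ, hk, ht] <;> simp <;> ring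
    calc ∑ k ∈ range K, ∑ t ∈ range Ttil, |updateZ z k0 t0 y k t|
        = ∑ k ∈ range K, ∑ t ∈ range Ttil,
            (|z k t| + (if t = t0 then (if k = k0 then |y| - |z k t| else 0) else 0)) := by
          refine Finset.sum_congr rfl fun k hk => Finset.sum_congr rfl fun t ht => h1 k hk t ht
      _ = ∑ k ∈ range K, ((∑ t ∈ range Ttil, |z k t|)
            + (if k = k0 then |y| - |z k t0| else 0)) := by
          refine Finset.sum_congr rfl fun k _ => ?_
          rw [Finset.sum_add_distrib,
            Finset.sum_ite_eq' (range Ttil) t0 (fun t => if k = k0 then |y| - |z k t| else 0),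
            if_pos (mem_range.mpr ht0)]
      _ = (∑ k ∈ range K, ∑ t ∈ range Ttil, |z k t|) + (|y| - |u|) := by
          rw [Finset.sum_add_distrib,
            Finset.sum_ite_eq' (range K) k0 (fun k => |y| - |z k t0|),
            if_pos (mem_range.mpr hk0), hu]
  -- squared term
  have hQp : ∀ p ∈ range P, ∑ t ∈ range T, (A p t - c * E p t) ^ 2
      = (∑ t ∈ range T, A p t ^ 2)
        - 2 * c * (∑ τ ∈ range L, D k0 p τ * A p (t0 + τ))
        + c ^ 2 * ∑ τ ∈ range L, D k0 p τ ^ 2 := by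
    intro p _
    have h : ∀ t ∈ range T, (A p t - c * E p t) ^ 2
        = A p t ^ 2 - 2 * c * (E p t * A p t) + c ^ 2 * (E p t * E p t) :=
      fun t _ => by ring
    rw [Finset.sum_congr rfl h, Finset.sum_add_distrib, Finset.sum_sub_distrib,
      ← Finset.mul_sum, ← Finset.mul_sum, hEA p, hEE p]
  have hQ : ∑ p ∈ range P, ∑ t ∈ range T, (A p t - c * E p t) ^ 2
      = (∑ p ∈ range P, ∑ t ∈ range T, A p t ^ 2)
        - 2 * c * (∑ p ∈ range P, ∑ τ ∈ range L, D k0 p τ * A p (t0 + τ))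
        + c ^ 2 * ∑ p ∈ range P, ∑ τ ∈ range L, D k0 p τ ^ 2 := by
    rw [Finset.sum_congr rfl hQp, Finset.sum_add_distrib, Finset.sum_sub_distrib,
      ← Finset.mul_sum, ← Finset.mul_sum]
  -- finish
  have hres2 : ∑ p ∈ range P, ∑ t ∈ range T,
      (X p t - ∑ k ∈ range K, conv Ttil L (updateZ z k0 t0 y k) (D k) p t) ^ 2
      = ∑ p ∈ range P, ∑ t ∈ range T, (A p t - c * E p t) ^ 2 :=
    Finset.sum_congr rfl fun p _ => Finset.sum_congr rfl fun t _ => by rw [hres p t]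
  simp only [cscObj, ← hT, ← hA, hres2, hQ, habs, hbeta, ← hu]
  rw [hc]
  ring
end
end

section
/- Fix k0 < K and t0 < T̃. For every y ∈ ℝ, every k < K and every t < T̃ with (k, t) ≠ (k0, t0), the following update identity holds: β_k[t](z^{(y)}) = β_k[t](z) + (z_{k0}[t0] − y) · Σ_{p<P} Σ_{τ<L} Σ_{τ'<L, τ' = τ + t − t0} D_k[p,τ] · D_{k0}[p,τ']. -/
open Finset

noncomputable section

lemma conv_update_aux (Ttil L : ℕ) (z : ℕ → ℝ) (t0 : ℕ) (y : ℝ)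
    (D : ℕ → ℕ → ℝ) (p s : ℕ) :
    conv Ttil L (fun t' => if t' = t0 then y else z t') D p s
      = conv Ttil L z D p s
        + (y - z t0) * conv Ttil L (fun s' => if s' = t0 then 1 else 0) D p s := by
  unfold conv
  rw [Finset.mul_sum, ← Finset.sum_add_distrib]
  refine Finset.sum_congr rfl fun s' _ => ?_
  rw [Finset.mul_sum, ← Finset.sum_add_distrib]
  refine Finset.sum_congr rfl fun τ _ => ?_
  by_cases h2 : s' = t0
  · subst h2
    by_cases h1 : s' + τ = s <;> simp [h1] <;> try ring
  · by_cases h1 : s' + τ = s <;> simp [h1, h2]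

lemma conv_indicator_aux (Ttil L t0 : ℕ) (ht0 : t0 < Ttil) (D : ℕ → ℕ → ℝ) (p s : ℕ) :
    conv Ttil L (fun s' => if s' = t0 then 1 else 0) D p s
      = ∑ τ' ∈ range L, if t0 + τ' = s then D p τ' else 0 := by
  unfold conv
  rw [Finset.sum_eq_single t0]
  · refine Finset.sum_congr rfl fun τ' _ => ?_
    simp
  · intro b _ hb
    simp [hb]
  · intro h
    exact absurd (Finset.mem_range.mpr ht0) h

/-- the `β` update identity for `(k, t) ≠ (k0, t0)`:
`β_k[t](z^{(y)}) = β_k[t](z) + (z_{k0}[t0] − y) · Σ_{p<P} Σ_{τ<L} Σ_{τ'<L, τ' = τ + t − t0}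
  D_k[p,τ]·D_{k0}[p,τ']`. -/
theorem beta_update_identity
    (P K L Ttil : ℕ) (hP : 0 < P) (hK : 0 < K) (hL : 0 < L) (hTtil : 0 < Ttil)
    (X : ℕ → ℕ → ℝ) (D : ℕ → ℕ → ℕ → ℝ) (z : ℕ → ℕ → ℝ)
    (k0 t0 : ℕ) (hk0 : k0 < K) (ht0 : t0 < Ttil) (y : ℝ)
    (k t : ℕ) (hk : k < K) (ht : t < Ttil) (hne : (k, t) ≠ (k0, t0)) :
    beta P K L Ttil X D (updateZ z k0 t0 y) k t
      = beta P K L Ttil X D z k t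
        + (z k0 t0 - y) *
            ∑ p ∈ range P, ∑ τ ∈ range L, ∑ τ' ∈ range L,
              if (τ' : ℤ) = (τ : ℤ) + (t : ℤ) - (t0 : ℤ) then D k p τ * D k0 p τ' else 0 := by
  have hne' : ¬(k = k0 ∧ t = t0) := by
    rintro ⟨rfl, rfl⟩; exact hne rfl
  have hz : updateZ z k0 t0 y k t = z k t := by
    simp only [updateZ, if_neg hne']
  have hsum : ∀ p s, ∑ l ∈ range K, conv Ttil L (updateZ z k0 t0 y l) (D l) p s
      = ∑ l ∈ range K, conv Ttil L (z l) (D l) p s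
        + (y - z k0 t0) * conv Ttil L (fun s' => if s' = t0 then 1 else 0) (D k0) p s := by
    intro p s
    have h1 : ∀ l, conv Ttil L (updateZ z k0 t0 y l) (D l) p s
        = conv Ttil L (z l) (D l) p s
          + (if l = k0 then
              (y - z k0 t0) * conv Ttil L (fun s' => if s' = t0 then 1 else 0) (D k0) p s
            else 0) := by
      intro l
      by_cases hl : l = k0
      · rw [hl, if_pos rfl]
        have hfun : updateZ z k0 t0 y k0 = fun t' => if t' = t0 then y else z k0 t' := by
          funext t'; simp [updateZ]
        rw [hfun]
        exact conv_update_aux Ttil L (z k0) t0 y (D k0) p s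
      · have hfun : updateZ z k0 t0 y l = z l := by
          funext t'; simp [updateZ, hl]
        rw [hfun, if_neg hl]; ring
    simp only [h1]
    rw [Finset.sum_add_distrib, Finset.sum_ite_eq' (range K) k0,
      if_pos (Finset.mem_range.mpr hk0)]
  have hC : ∀ p τ, conv Ttil L (fun s' => if s' = t0 then 1 else 0) (D k0) p (t + τ)
      = ∑ τ' ∈ range L, if (τ' : ℤ) = (τ : ℤ) + (t : ℤ) - (t0 : ℤ) then D k0 p τ' else 0 := by
    intro p τ
    rw [conv_indicator_aux Ttil L t0 ht0]
    refine Finset.sum_congr rfl fun τ' _ => ?_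
    exact if_congr (by omega) rfl rfl
  unfold beta corr
  simp only [hz, hsum, hC]
  rw [Finset.mul_sum, ← Finset.sum_add_distrib]
  refine Finset.sum_congr rfl fun p _ => ?_
  rw [Finset.mul_sum, ← Finset.sum_add_distrib]
  refine Finset.sum_congr rfl fun τ _ => ?_
  have hfac : ∑ τ' ∈ range L,
        (if (τ' : ℤ) = (τ : ℤ) + (t : ℤ) - (t0 : ℤ) then D k p τ * D k0 p τ' else 0)
      = D k p τ * ∑ τ' ∈ range L,
        (if (τ' : ℤ) = (τ : ℤ) + (t : ℤ) - (t0 : ℤ) then D k0 p τ' else 0) := by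
    rw [Finset.mul_sum]
    refine Finset.sum_congr rfl fun τ' _ => ?_
    split_ifs <;> ring
  rw [hfac]
  ring
end
end

section
/- Fix k0 < K and t0 < T̃. If t < T̃ satisfies |t − t0| ≥ L, then for every k < K and every y ∈ ℝ, changing the coordinate z_{k0}[t0] to y leaves β_k[t] unchanged: β_k[t](z^{(y)}) = β_k[t](z). (Hence at most K·(2L−1) coefficients of β need to be updated after a coordinate update.) -/
open Finset

noncomputable section

/-- if `|t − t0| ≥ L` then changing the coordinate `z_{k0}[t0]` leaves
`β_k[t]` unchanged. -/
theorem beta_unchanged_far_coordinates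
    (P K L Ttil : ℕ) (hP : 0 < P) (hK : 0 < K) (hL : 0 < L) (hTtil : 0 < Ttil)
    (X : ℕ → ℕ → ℝ) (D : ℕ → ℕ → ℕ → ℝ) (z : ℕ → ℕ → ℝ)
    (k0 t0 : ℕ) (hk0 : k0 < K) (ht0 : t0 < Ttil)
    (t : ℕ) (ht : t < Ttil) (hfar : (L : ℤ) ≤ |(t : ℤ) - (t0 : ℤ)|)
    (k : ℕ) (hk : k < K) (y : ℝ) :
    beta P K L Ttil X D (updateZ z k0 t0 y) k t = beta P K L Ttil X D z k t := by
  have hfar' : t0 + L ≤ t ∨ t + L ≤ t0 := by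
    rcases abs_cases ((t : ℤ) - (t0 : ℤ)) with ⟨h1, h2⟩ | ⟨h1, h2⟩ <;> omega
  have hzk : updateZ z k0 t0 y k t = z k t := by
    unfold updateZ
    rw [if_neg]
    rintro ⟨_, rfl⟩
    omega
  have hconv : ∀ l p τ, τ < L →
      conv Ttil L (updateZ z k0 t0 y l) (D l) p (t + τ) =
        conv Ttil L (z l) (D l) p (t + τ) := by
    intro l p τ hτ
    unfold conv
    refine Finset.sum_congr rfl fun s hs => Finset.sum_congr rfl fun τ' hτ' => ?_
    simp only [Finset.mem_range] at hs hτ'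
    split_ifs with h
    · congr 1
      unfold updateZ
      rw [if_neg]
      rintro ⟨_, rfl⟩
      omega
    · rfl
  unfold beta corr
  refine Finset.sum_congr rfl fun p hp => Finset.sum_congr rfl fun τ hτ => ?_
  simp only [Finset.mem_range] at hτ
  rw [hzk]
  beta_reduce
  congr 2
  congr 1
  exact Finset.sum_congr rfl fun l _ => hconv l p τ hτ
end
end

section
/- Fix k < K. For every p < P and τ < L, the correlation of the activations with the residuals factorizes through the precomputed quantities Φ and Ψ: Σ_{n<N} Σ_{s<T̃} z_k^n[s] · (X^n − Σ_{l<K} z_l^n ∗ D_l)[p, τ+s] = Φ_k[p,τ] − Σ_{l<K} Σ_{τ'<L} Ψ_{k,l}[τ − τ'] · D_l[p,τ']. -/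
open Finset

noncomputable section

/-- `Φ_k[p,τ] = Σ_{n<N} Σ_{s<T̃} z_k^n[s]·X^n[p, τ+s]`. -/
def Phi (N Ttil : ℕ) (z : ℕ → ℕ → ℕ → ℝ) (X : ℕ → ℕ → ℕ → ℝ) (k p τ : ℕ) : ℝ :=
  ∑ n ∈ range N, ∑ s ∈ range Ttil, z k n s * X n p (τ + s)

/-- `Ψ_{k,l}[δ] = Σ_{n<N} Σ_{s<T̃, 0 ≤ s+δ < T̃} z_k^n[s]·z_l^n[s+δ]`. -/
def Psi (N Ttil : ℕ) (z : ℕ → ℕ → ℕ → ℝ) (k l : ℕ) (δ : ℤ) : ℝ :=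
  ∑ n ∈ range N, ∑ s ∈ range Ttil,
    if 0 ≤ (s : ℤ) + δ ∧ (s : ℤ) + δ < (Ttil : ℤ) then z k n s * z l n ((s : ℤ) + δ).toNat
    else 0

lemma collapse (Ttil : ℕ) (a : ℝ) (f : ℕ → ℝ) (c : ℝ) (τ s τ' : ℕ) :
    (∑ s' ∈ range Ttil, if s' + τ' = τ + s then a * (f s' * c) else 0)
    = (if 0 ≤ (s:ℤ) + ((τ:ℤ) - (τ':ℤ)) ∧ (s:ℤ) + ((τ:ℤ) - (τ':ℤ)) < (Ttil:ℤ)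
       then a * f (((s:ℤ) + ((τ:ℤ) - (τ':ℤ))).toNat) else 0) * c := by
  by_cases h : τ' ≤ τ + s
  · have hv : ∀ s', s' + τ' = τ + s ↔ s' = τ + s - τ' := by omega
    simp only [hv]
    rw [Finset.sum_ite_eq' (range Ttil) (τ + s - τ') (fun s' => a * (f s' * c))]
    have hn : ((s:ℤ) + ((τ:ℤ) - (τ':ℤ))).toNat = τ + s - τ' := by omega
    by_cases h2 : τ + s - τ' < Ttil
    · rw [if_pos (Finset.mem_range.mpr h2), if_pos (by constructor <;> omega), hn]
      ring
    · rw [if_neg (fun hc => h2 (Finset.mem_range.mp hc)), if_neg (by omega), zero_mul]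
  · rw [Finset.sum_eq_zero fun s' _ => if_neg (by omega), if_neg (by omega), zero_mul]

lemma sum4 {f : ℕ → ℕ → ℕ → ℕ → ℝ} (A B C E : Finset ℕ) :
    ∑ a ∈ A, ∑ b ∈ B, ∑ c ∈ C, ∑ d ∈ E, f a b c d
    = ∑ c ∈ C, ∑ d ∈ E, ∑ a ∈ A, ∑ b ∈ B, f a b c d :=
  calc ∑ a ∈ A, ∑ b ∈ B, ∑ c ∈ C, ∑ d ∈ E, f a b c d
      = ∑ a ∈ A, ∑ c ∈ C, ∑ b ∈ B, ∑ d ∈ E, f a b c d :=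
        Finset.sum_congr rfl fun a _ => Finset.sum_comm
    _ = ∑ c ∈ C, ∑ a ∈ A, ∑ b ∈ B, ∑ d ∈ E, f a b c d := Finset.sum_comm
    _ = ∑ c ∈ C, ∑ a ∈ A, ∑ d ∈ E, ∑ b ∈ B, f a b c d :=
        Finset.sum_congr rfl fun c _ => Finset.sum_congr rfl fun a _ => Finset.sum_comm
    _ = ∑ c ∈ C, ∑ d ∈ E, ∑ a ∈ A, ∑ b ∈ B, f a b c d :=
        Finset.sum_congr rfl fun c _ => Finset.sum_comm

/-- the correlation of the activations with the residuals factorizes through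
the precomputed quantities `Φ` and `Ψ`. -/
theorem residual_correlation_precomputation
    (P K L Ttil N : ℕ) (hP : 0 < P) (hK : 0 < K) (hL : 0 < L) (hTtil : 0 < Ttil)
    (hN : 0 < N)
    (X : ℕ → ℕ → ℕ → ℝ) (D : ℕ → ℕ → ℕ → ℝ) (z : ℕ → ℕ → ℕ → ℝ)
    (k : ℕ) (hk : k < K) (p : ℕ) (hp : p < P) (τ : ℕ) (hτ : τ < L) :
    ∑ n ∈ range N, ∑ s ∈ range Ttil,
        z k n s * (X n p (τ + s) - ∑ l ∈ range K, conv Ttil L (z l n) (D l) p (τ + s))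
      = Phi N Ttil z X k p τ
        - ∑ l ∈ range K, ∑ τ' ∈ range L, Psi N Ttil z k l ((τ : ℤ) - (τ' : ℤ)) * D l p τ' := by
  simp only [mul_sub, Finset.sum_sub_distrib]
  congr 1
  simp only [conv, Finset.mul_sum, mul_ite, mul_zero, Psi, Finset.sum_mul, ite_mul, zero_mul]
  calc ∑ n ∈ range N, ∑ s ∈ range Ttil, ∑ l ∈ range K, ∑ s' ∈ range Ttil, ∑ τ' ∈ range L,
          (if s' + τ' = τ + s then z k n s * (z l n s' * D l p τ') else 0)
      = ∑ n ∈ range N, ∑ s ∈ range Ttil, ∑ l ∈ range K, ∑ τ' ∈ range L,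
          ((if 0 ≤ (s:ℤ) + ((τ:ℤ) - (τ':ℤ)) ∧ (s:ℤ) + ((τ:ℤ) - (τ':ℤ)) < (Ttil:ℤ)
            then z k n s * z l n (((s:ℤ) + ((τ:ℤ) - (τ':ℤ))).toNat) else 0) * D l p τ') := by
        refine Finset.sum_congr rfl fun n _ => Finset.sum_congr rfl fun s _ =>
          Finset.sum_congr rfl fun l _ => ?_
        rw [Finset.sum_comm]
        exact Finset.sum_congr rfl fun τ' _ => collapse Ttil (z k n s) (z l n) (D l p τ') τ s τ'
    _ = ∑ l ∈ range K, ∑ τ' ∈ range L, ∑ n ∈ range N, ∑ s ∈ range Ttil,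
          ((if 0 ≤ (s:ℤ) + ((τ:ℤ) - (τ':ℤ)) ∧ (s:ℤ) + ((τ:ℤ) - (τ':ℤ)) < (Ttil:ℤ)
            then z k n s * z l n (((s:ℤ) + ((τ:ℤ) - (τ':ℤ))).toNat) else 0) * D l p τ') :=
        sum4 _ _ _ _
    _ = ∑ l ∈ range K, ∑ τ' ∈ range L, ∑ n ∈ range N, ∑ s ∈ range Ttil,
          (if 0 ≤ (s:ℤ) + ((τ:ℤ) - (τ':ℤ)) ∧ (s:ℤ) + ((τ:ℤ) - (τ':ℤ)) < (Ttil:ℤ)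
            then z k n s * z l n (((s:ℤ) + ((τ:ℤ) - (τ':ℤ))).toNat) * D l p τ' else 0) := by
        simp only [ite_mul, zero_mul]
end
end
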